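/- Every irreducible unitary representation of G = ℤ ⋊ ℤ/2 on a nonzero finite-dimensional complex inner product space has dimension 1 or 2, and every irreducible unitary representation of dimension 2 is isomorphic to V_α for some unit complex number α with α ≠ ±1. -/

import Mathlib

/-- The inversion automorphism of `Multiplicative ℤ`, i.e. negation on `ℤ`. -/
def negAut : MulAut (Multiplicative ℤ) := MulEquiv.inv (Multiplicative ℤ)

lemma negAut_sq : negAut ^ 2 = 1 := by
  ext x
  show negAut (negAut x) = x
  exact inv_inv x

/-- The action of `ℤ/2` on `ℤ` in which the nontrivial element acts by negation. -/
def dihedralAction : Multiplicative (ZMod 2) →* MulAut (Multiplicative ℤ) where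
  toFun ε := negAut ^ (ε.toAdd.val)
  map_one' := by
    show negAut ^ (0 : ZMod 2).val = 1
    simp
  map_mul' x y := by
    show negAut ^ (x.toAdd + y.toAdd).val = _
    rw [ZMod.val_add, ← pow_eq_pow_mod _ negAut_sq, pow_add]

/-- The infinite dihedral group `ℤ ⋊ ℤ/2`, with the nontrivial element of `ℤ/2`
acting on `ℤ` by negation. -/
def DihedralZ : Type := SemidirectProduct (Multiplicative ℤ) (Multiplicative (ZMod 2)) dihedralAction


instance : Group DihedralZ := inferInstanceAs (Group (SemidirectProduct _ _ _))

/-- The generator `t = (1, 0)` of `ℤ ⋊ ℤ/2`. -/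
def tGen : DihedralZ := ⟨Multiplicative.ofAdd (1 : ℤ), 1⟩

/-- The generator `s = (0, 1)` of `ℤ ⋊ ℤ/2`. -/
def sGen : DihedralZ := ⟨1, Multiplicative.ofAdd (1 : ZMod 2)⟩

/-!
The generator `t` acts by a unitary operator, so it has an eigenvector `v` whose eigenvalue `α`
has modulus one. The relation `s t s⁻¹ = t⁻¹` makes `s v` an eigenvector with eigenvalue `α⁻¹`,
so `span {v, s v}` is invariant, hence everything, and the dimension is at most two. In dimension
two, `α = α⁻¹` would make `t` a scalar, and then any eigenvector of `s` would span an invariant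
line; so `α ≠ ±1`. In the basis `(v, s v)` the generators act by the matrices of `V_α`, and since
`t` and `s` generate `G` this basis intertwines the two representations.
-/

open Module Submodule Matrix Multiplicative

def zmodTwoPowersHom {H : Type*} [Group H] (S : H) (hS : S ^ 2 = 1) :
    Multiplicative (ZMod 2) →* H where
  toFun ε := S ^ ε.toAdd.val
  map_one' := pow_zero S
  map_mul' x y := by rw [toAdd_mul, ZMod.val_add, ← pow_eq_pow_mod _ hS, pow_add]

@[simp]
theorem zmodTwoPowersHom_apply {H : Type*} [Group H] (S : H) (hS : S ^ 2 = 1)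
    (ε : Multiplicative (ZMod 2)) : zmodTwoPowersHom S hS ε = S ^ ε.toAdd.val :=
  rfl

theorem diag_inv_mem_unitaryGroup {α : ℂ} (hα : ‖α‖ = 1) :
    !![α, 0; 0, α⁻¹] ∈ unitaryGroup (Fin 2) ℂ := by
  have hconj : star α = α⁻¹ := (Complex.inv_eq_conj hα).symm
  have hα0 : α ≠ 0 := ne_zero_of_norm_ne_zero (by rw [hα]; exact one_ne_zero)
  rw [mem_unitaryGroup_iff, star_eq_conjTranspose, eta_fin_two !![α, 0; 0, α⁻¹]ᴴ]
  simp [one_fin_two, hconj, hα0]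

theorem swap_mem_unitaryGroup : !![(0 : ℂ), 1; 1, 0] ∈ unitaryGroup (Fin 2) ℂ := by
  rw [mem_unitaryGroup_iff, star_eq_conjTranspose, eta_fin_two !![(0 : ℂ), 1; 1, 0]ᴴ]
  simp [one_fin_two]

def LinearIsometryEquiv.toLinearEquivMonoidHom {R E : Type*} [Semiring R]
    [SeminormedAddCommGroup E] [Module R E] : (E ≃ₗᵢ[R] E) →* (E ≃ₗ[R] E) where
  toFun e := e.toLinearEquiv
  map_one' := rfl
  map_mul' _ _ := rfl

theorem LinearIsometry.norm_eq_one_of_apply_eq_smul {𝕜 E : Type*} [NormedField 𝕜]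
    [NormedAddCommGroup E] [NormedSpace 𝕜 E] (f : E →ₗᵢ[𝕜] E) {v : E} (hv : v ≠ 0) {α : 𝕜}
    (h : f v = α • v) : ‖α‖ = 1 := by
  have := congrArg norm h
  rw [f.norm_map, norm_smul] at this
  exact (mul_eq_right₀ (norm_ne_zero_iff.2 hv)).1 this.symm

def IsIrreducibleRep {G K V : Type*} [Group G] [DivisionRing K] [AddCommGroup V] [Module K V]
    (ρ : G →* (V ≃ₗ[K] V)) : Prop :=
  ∀ p : Submodule K V, (∀ g, p.map (ρ g : V →ₗ[K] V) ≤ p) → p = ⊥ ∨ p = ⊤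

theorem Submodule.map_le_of_closure_eq_top {G K V : Type*} [Group G] [DivisionRing K]
    [AddCommGroup V] [Module K V] [FiniteDimensional K V] (ρ : G →* (V ≃ₗ[K] V)) {S : Set G}
    (hS : Subgroup.closure S = ⊤) {p : Submodule K V}
    (hp : ∀ g ∈ S, p.map (ρ g : V →ₗ[K] V) ≤ p) (g : G) : p.map (ρ g : V →ₗ[K] V) ≤ p := by
  have map_mul (g h : G) (q : Submodule K V) :
      q.map (ρ (g * h) : V →ₗ[K] V) = (q.map (ρ h : V →ₗ[K] V)).map (ρ g : V →ₗ[K] V) := by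
    rw [_root_.map_mul, LinearEquiv.coe_toLinearMap_mul, Module.End.mul_eq_comp,
      Submodule.map_comp]
  let stab : Subgroup G :=
    { carrier := {g | p.map (ρ g : V →ₗ[K] V) = p}
      one_mem' := by simp
      mul_mem' := fun {g h} (hg : p.map _ = p) (hh : p.map _ = p) =>
        show p.map _ = p by rw [map_mul, hh, hg]
      inv_mem' := fun {g} (hg : p.map _ = p) => show p.map _ = p by
        conv_lhs => rw [← hg, ← map_mul, inv_mul_cancel]
        simp }
  -- in finite dimension, `p.map f ≤ p` for an automorphism `f` forces equality
  have hSstab : S ⊆ stab := fun g hg =>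
    Submodule.eq_of_le_of_finrank_le (hp g hg) (LinearEquiv.finrank_map_eq (ρ g) p).ge
  exact ((Subgroup.closure_le stab).2 hSstab (hS ▸ Subgroup.mem_top g) : p.map _ = p).le

namespace DihedralZ

theorem sGen_mul_sGen : sGen * sGen = 1 := rfl

theorem tGen_mul_sGen : tGen * sGen = sGen * tGen⁻¹ := rfl

theorem inl_eq_tGen_zpow (n : Multiplicative ℤ) :
    (SemidirectProduct.inl n : DihedralZ) = tGen ^ n.toAdd := by
  conv_lhs => rw [← ofAdd_toAdd n, ← mul_one n.toAdd, ← smul_eq_mul, ofAdd_zsmul]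
  exact map_zpow SemidirectProduct.inl (ofAdd (1 : ℤ)) n.toAdd

theorem inr_eq_sGen_pow (ε : Multiplicative (ZMod 2)) :
    (SemidirectProduct.inr ε : DihedralZ) = sGen ^ ε.toAdd.val := by
  conv_lhs => rw [← ofAdd_toAdd ε, ← ZMod.natCast_zmod_val ε.toAdd, ← nsmul_one, ofAdd_nsmul]
  exact map_pow SemidirectProduct.inr (ofAdd (1 : ZMod 2)) ε.toAdd.val

theorem closure_tGen_sGen : Subgroup.closure {tGen, sGen} = ⊤ := by
  refine eq_top_iff.2 fun g _ => ?_
  rw [← SemidirectProduct.inl_left_mul_inr_right g, inl_eq_tGen_zpow, inr_eq_sGen_pow]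
  exact mul_mem (zpow_mem (Subgroup.subset_closure (by simp)) _)
    (pow_mem (Subgroup.subset_closure (by simp)) _)

theorem hom_ext {M : Type*} [Monoid M] {f g : DihedralZ →* M} (ht : f tGen = g tGen)
    (hs : f sGen = g sGen) : f = g := by
  refine MonoidHom.eq_of_eqOn_dense closure_tGen_sGen ?_
  rintro x (rfl | rfl) <;> assumption

section lift

variable {H : Type*} [Group H] (T S : H) (hS : S ^ 2 = 1) (hST : S * T * S⁻¹ = T⁻¹)

def lift : DihedralZ →* H :=
  SemidirectProduct.lift (zpowersHom H T) (zmodTwoPowersHom S hS) fun ε => by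
    ext1
    obtain h | h : ε.toAdd.val = 0 ∨ ε.toAdd.val = 1 := by have := ZMod.val_lt ε.toAdd; omega
    · simp [dihedralAction, h]
    · simp [dihedralAction, h, negAut, hST]

@[simp]
theorem lift_tGen : lift T S hS hST tGen = T :=
  (SemidirectProduct.lift_inl _ _ _ (ofAdd 1)).trans (zpow_one T)

@[simp]
theorem lift_sGen : lift T S hS hST sGen = S :=
  (SemidirectProduct.lift_inr _ _ _ (ofAdd 1)).trans (pow_one S)

end lift

/-- The representation `V_α`. -/
noncomputable def unitaryRepTwo {α : ℂ} (hα : ‖α‖ = 1) : DihedralZ →* unitaryGroup (Fin 2) ℂ :=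
  lift ⟨_, diag_inv_mem_unitaryGroup hα⟩ ⟨_, swap_mem_unitaryGroup⟩
    (by ext i j; fin_cases i <;> fin_cases j <;> simp [sq])
    (by
      have hconj : star α = α⁻¹ := (Complex.inv_eq_conj hα).symm
      ext i j
      fin_cases i <;> fin_cases j <;>
        simp [star_eq_conjTranspose, conjTranspose_apply, vecMul, dotProduct, hconj])

@[simp]
theorem coe_unitaryRepTwo_tGen {α : ℂ} (hα : ‖α‖ = 1) :
    (unitaryRepTwo hα tGen : Matrix (Fin 2) (Fin 2) ℂ) = !![α, 0; 0, α⁻¹] := by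
  simp [unitaryRepTwo]

@[simp]
theorem coe_unitaryRepTwo_sGen {α : ℂ} (hα : ‖α‖ = 1) :
    (unitaryRepTwo hα sGen : Matrix (Fin 2) (Fin 2) ℂ) = !![0, 1; 1, 0] := by
  simp [unitaryRepTwo]

section linearRep

variable {K V : Type*} [Field K] [AddCommGroup V] [Module K V] {ρ : DihedralZ →* (V ≃ₗ[K] V)}

theorem apply_mul (g h : DihedralZ) (v : V) : ρ (g * h) v = ρ g (ρ h v) := by
  rw [map_mul, LinearEquiv.mul_apply]

theorem apply_sGen_apply_sGen (v : V) : ρ sGen (ρ sGen v) = v := by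
  rw [← apply_mul, sGen_mul_sGen, map_one, LinearEquiv.coe_one, id]

theorem apply_tGen_apply_sGen {α : K} (hα : α ≠ 0) {v : V} (hv : ρ tGen v = α • v) :
    ρ tGen (ρ sGen v) = α⁻¹ • ρ sGen v := by
  have hinv : ρ tGen⁻¹ v = α⁻¹ • v := by
    rw [eq_inv_smul_iff₀ hα, ← LinearEquiv.map_smul, ← hv, ← apply_mul, inv_mul_cancel, map_one,
      LinearEquiv.coe_one, id]
  rw [← apply_mul, tGen_mul_sGen, apply_mul, hinv, LinearEquiv.map_smul]

theorem exists_linearEquiv_apply_eq_mulVec (ψ : DihedralZ →* Matrix (Fin 2) (Fin 2) K) {α : K}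
    (hψt : ψ tGen = !![α, 0; 0, α⁻¹]) (hψs : ψ sGen = !![0, 1; 1, 0]) (hα : α ≠ 0) {v : V}
    (hv : ρ tGen v = α • v) (hspan : span K {v, ρ sGen v} = ⊤) (h2 : finrank K V = 2) :
    ∃ e : V ≃ₗ[K] (Fin 2 → K), ∀ g w, e (ρ g w) = ψ g *ᵥ e w := by
  let b := basisOfTopLeSpanOfCardEqFinrank (R := K) ![v, ρ sGen v]
    (by rw [range_cons_cons_empty, hspan]) (by rw [h2, Fintype.card_fin])
  have hb : ⇑b = ![v, ρ sGen v] := coe_basisOfTopLeSpanOfCardEqFinrank _ _ _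
  have hv_repr : b.repr v = Finsupp.single 0 1 := by simpa [hb] using b.repr_self 0
  have hsv_repr : b.repr (ρ sGen v) = Finsupp.single 1 1 := by simpa [hb] using b.repr_self 1
  have hψ : (LinearMap.toMatrixAlgEquiv b).toMonoidHom.comp
      (LinearEquiv.automorphismGroup.toLinearMapMonoidHom.comp ρ) = ψ := by
    refine hom_ext ?_ ?_ <;> ext i j <;> fin_cases i <;> fin_cases j <;>
      simp [LinearMap.toMatrixAlgEquiv_apply, hψt, hψs, hb, hv, hv_repr, hsv_repr,
        apply_tGen_apply_sGen hα hv, apply_sGen_apply_sGen]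
  refine ⟨b.equivFun, fun g w => ?_⟩
  rw [← hψ]
  exact (LinearMap.toMatrix_mulVec_repr b b _ w).symm

variable [FiniteDimensional K V]

theorem span_eq_top_of_invariant (hirr : IsIrreducibleRep ρ) {s : Set V} (hs0 : ∃ v ∈ s, v ≠ 0)
    (ht : ∀ v ∈ s, ρ tGen v ∈ span K s) (hs : ∀ v ∈ s, ρ sGen v ∈ span K s) :
    span K s = ⊤ := by
  refine (hirr _ (Submodule.map_le_of_closure_eq_top ρ closure_tGen_sGen ?_)).resolve_left ?_
  · rintro g (rfl | rfl) <;> rw [Submodule.map_span_le] <;> assumption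
  · obtain ⟨v, hv, hv0⟩ := hs0
    exact fun h => hv0 (span_eq_bot.1 h v hv)

theorem span_pair_eq_top (hirr : IsIrreducibleRep ρ) {α : K} (hα : α ≠ 0) {v : V} (hv0 : v ≠ 0)
    (hv : ρ tGen v = α • v) : span K {v, ρ sGen v} = ⊤ := by
  have hv_mem : v ∈ span K {v, ρ sGen v} := subset_span (by simp)
  have hsv_mem : ρ sGen v ∈ span K {v, ρ sGen v} := subset_span (by simp)
  refine span_eq_top_of_invariant hirr ⟨v, by simp, hv0⟩ ?_ ?_ <;> rintro w (rfl | rfl)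
  · rw [hv]; exact smul_mem _ _ hv_mem
  · rw [apply_tGen_apply_sGen hα hv]; exact smul_mem _ _ hsv_mem
  · exact hsv_mem
  · rw [apply_sGen_apply_sGen]; exact hv_mem

theorem finrank_le_two (hirr : IsIrreducibleRep ρ) {α : K} (hα : α ≠ 0) {v : V} (hv0 : v ≠ 0)
    (hv : ρ tGen v = α • v) : finrank K V ≤ 2 := by
  classical
  rw [← finrank_top, ← span_pair_eq_top hirr hα hv0 hv]
  exact (finrank_span_le_card ({v, ρ sGen v} : Set V)).trans (by simpa using Finset.card_le_two)

theorem inv_ne_self_of_finrank_eq_two [IsAlgClosed K] (hirr : IsIrreducibleRep ρ)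
    (h2 : finrank K V = 2) {α : K} (hα : α ≠ 0) {v : V} (hv0 : v ≠ 0) (hv : ρ tGen v = α • v) :
    α⁻¹ ≠ α := by
  intro hαα
  have hT : ∀ w, ρ tGen w = α • w := by
    have : span K {v, ρ sGen v} ≤ Module.End.eigenspace (ρ tGen : V →ₗ[K] V) α := by
      rw [span_le]
      rintro _ (rfl | rfl)
      · exact Module.End.mem_eigenspace_iff.2 hv
      · exact Module.End.mem_eigenspace_iff.2 (hαα ▸ apply_tGen_apply_sGen hα hv)
    rw [span_pair_eq_top hirr hα hv0 hv, top_le_iff] at this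
    exact fun w => Module.End.mem_eigenspace_iff.1 (this ▸ mem_top)
  have : Nontrivial V := ⟨⟨v, 0, hv0⟩⟩
  obtain ⟨μ, hμ⟩ := Module.End.exists_eigenvalue (ρ sGen : V →ₗ[K] V)
  obtain ⟨w, hw⟩ := hμ.exists_hasEigenvector
  have hSw : ρ sGen w = μ • w := hw.apply_eq_smul
  have hline : span K {w} = ⊤ := by
    refine span_eq_top_of_invariant hirr ⟨w, rfl, hw.2⟩ ?_ ?_ <;>
      simp only [Set.mem_singleton_iff, forall_eq]
    · rw [hT]; exact smul_mem _ _ (mem_span_singleton_self w)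
    · rw [hSw]; exact smul_mem _ _ (mem_span_singleton_self w)
  have := finrank_span_singleton (K := K) hw.2
  rw [hline, finrank_top, h2] at this
  omega

end linearRep

end DihedralZ

/-- Every irreducible unitary representation of `G = ℤ ⋊ ℤ/2` on a nonzero
finite-dimensional complex inner product space has dimension `1` or `2`, and every
irreducible unitary representation of dimension `2` is isomorphic to `V_α` for some
unit complex number `α ≠ ±1`. -/
theorem dihedralZ_irreducible_classification (W : Type)
    [NormedAddCommGroup W] [InnerProductSpace ℂ W] [FiniteDimensional ℂ W]
    (ρ : DihedralZ →* (W ≃ₗᵢ[ℂ] W))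
    (hW : 0 < Module.finrank ℂ W)
    (hirr : ∀ p : Submodule ℂ W,
        (∀ g : DihedralZ, p.map ((ρ g).toLinearEquiv : W →ₗ[ℂ] W) ≤ p) →
          p = ⊥ ∨ p = ⊤) :
    (Module.finrank ℂ W = 1 ∨ Module.finrank ℂ W = 2) ∧
    (Module.finrank ℂ W = 2 →
      ∃ α : ℂ, ‖α‖ = 1 ∧ α ≠ 1 ∧ α ≠ -1 ∧
        ∃ ρα : DihedralZ →* Matrix.unitaryGroup (Fin 2) ℂ,
          (ρα tGen : Matrix (Fin 2) (Fin 2) ℂ) = !![α, 0; 0, α⁻¹] ∧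
          (ρα sGen : Matrix (Fin 2) (Fin 2) ℂ) = !![0, 1; 1, 0] ∧
          ∃ e : W ≃ₗ[ℂ] (Fin 2 → ℂ),
            ∀ (g : DihedralZ) (w : W),
              e (ρ g w) = Matrix.mulVec (ρα g : Matrix (Fin 2) (Fin 2) ℂ) (e w)) := by
  let ρ' := LinearIsometryEquiv.toLinearEquivMonoidHom.comp ρ
  have hirr' : IsIrreducibleRep ρ' := hirr
  have : Nontrivial W := Module.finrank_pos_iff.mp hW
  obtain ⟨α, hα⟩ := Module.End.exists_eigenvalue (ρ' tGen : W →ₗ[ℂ] W)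
  obtain ⟨v, hv⟩ := hα.exists_hasEigenvector
  have hTv : ρ' tGen v = α • v := hv.apply_eq_smul
  have hα1 : ‖α‖ = 1 := (ρ tGen).toLinearIsometry.norm_eq_one_of_apply_eq_smul hv.2 hTv
  have hα0 : α ≠ 0 := ne_zero_of_norm_ne_zero (by rw [hα1]; exact one_ne_zero)
  refine ⟨by have := DihedralZ.finrank_le_two hirr' hα0 hv.2 hTv; omega, fun h2 => ?_⟩
  have hαα := DihedralZ.inv_ne_self_of_finrank_eq_two hirr' h2 hα0 hv.2 hTv
  refine ⟨α, hα1, fun h => hαα (by simp [h]), fun h => hαα (by simp [h]),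
    DihedralZ.unitaryRepTwo hα1, by simp, by simp, ?_⟩
  exact DihedralZ.exists_linearEquiv_apply_eq_mulVec
    ((unitaryGroup (Fin 2) ℂ).subtype.comp (DihedralZ.unitaryRepTwo hα1)) (by simp) (by simp)
    hα0 hTv (DihedralZ.span_pair_eq_top hirr' hα0 hv.2 hTv) h2
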